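/- Let m ≥ 4 be an integer, n ≥ 3, and suppose (n+1−m)(1/2 − (m−2)/(2(m−1))) + 2γ_{m−1} ≥ −1/(2(m−1)). Let α = (m²−3m)/(m²−2m−2), and define γ_m = α γ_{m−1} + (1−α) γ_{w,m} with γ_{w,m} = (m−1)/(2m) − (n+m−1)/(2m(m−1)(m−2)) and p_m = 2m/(m−1). Then (n+1−m)(1/2 − 1/p_m) + 2γ_m ≥ (m−2)(m−3)/(2m³ − 6m² + 4) > 0. -/

import Mathlib

theorem stmt_9 (m n : ℤ) (hm : 4 ≤ m) (hn : 3 ≤ n)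
    (γm1 : ℚ)
    (hind : ((n : ℚ) + 1 - m) * (1 / 2 - ((m : ℚ) - 2) / (2 * ((m : ℚ) - 1))) + 2 * γm1
      ≥ -(1 / (2 * ((m : ℚ) - 1))))
    (α γwm pm γm : ℚ)
    (hα : α = ((m : ℚ) ^ 2 - 3 * m) / ((m : ℚ) ^ 2 - 2 * m - 2))
    (hγwm : γwm = ((m : ℚ) - 1) / (2 * m) - ((n : ℚ) + m - 1) / (2 * m * (m - 1) * (m - 2)))
    (hpm : pm = 2 * (m : ℚ) / ((m : ℚ) - 1))
    (hγm : γm = α * γm1 + (1 - α) * γwm) :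
    ((n : ℚ) + 1 - m) * (1 / 2 - 1 / pm) + 2 * γm
        ≥ ((m : ℚ) - 2) * ((m : ℚ) - 3) / (2 * m ^ 3 - 6 * m ^ 2 + 4) ∧
      (0 : ℚ) < ((m : ℚ) - 2) * ((m : ℚ) - 3) / (2 * m ^ 3 - 6 * m ^ 2 + 4) := by
  have hM : (4 : ℚ) ≤ (m : ℚ) := by exact_mod_cast hm
  have h1 : ((m : ℚ) - 1) > 0 := by linarith
  have h2 : ((m : ℚ) - 2) > 0 := by linarith
  have hm0 : (m : ℚ) > 0 := by linarith
  have hq : ((m : ℚ) ^ 2 - 2 * m - 2) > 0 := by nlinarith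
  have hD : (2 * (m:ℚ) ^ 3 - 6 * m ^ 2 + 4) > 0 := by nlinarith
  have hE : 0 ≤ ((n : ℚ) + 1 - m) * (1 / 2 - ((m : ℚ) - 2) / (2 * ((m : ℚ) - 1))) + 2 * γm1
      + 1 / (2 * ((m : ℚ) - 1)) := by linarith [hind]
  have hα0 : 0 ≤ α := by
    rw [hα]
    apply div_nonneg _ (le_of_lt hq)
    nlinarith
  have hid : ((n : ℚ) + 1 - m) * (1 / 2 - 1 / pm) + 2 * γm
      - ((m : ℚ) - 2) * ((m : ℚ) - 3) / (2 * m ^ 3 - 6 * m ^ 2 + 4)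
      = α * (((n : ℚ) + 1 - m) * (1 / 2 - ((m : ℚ) - 2) / (2 * ((m : ℚ) - 1))) + 2 * γm1
        + 1 / (2 * ((m : ℚ) - 1))) := by
    subst hγm hα hγwm hpm
    have hD' : (m:ℚ) ^ 2 * ((m:ℚ) * 2 - 6) + 4 ≠ 0 := by nlinarith
    have hq' : (m : ℚ) * ((m : ℚ) - 2) - 2 ≠ 0 := by nlinarith
    field_simp
    ring
  constructor
  · nlinarith [mul_nonneg hα0 hE]
  · exact div_pos (by nlinarith) hD
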